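/- Let S_n be an independent dominating set of Q_n. The set S_{n+1} = {0·v : v ∈ S_n} ∪ {1·(v ⊕ e_0) : v ∈ S_n}, where v ⊕ e_0 denotes v with its last bit flipped and the dot denotes prepending a leading bit, is an independent dominating set of Q_{n+1} of size 2|S_n|. Consequently α_{n+1} ≤ 2 α_n for all n ≥ 1. -/

import Mathlib

/-- The n-dimensional hypercube graph on binary n-tuples, adjacency = Hamming distance 1. -/
def Q (n : ℕ) : SimpleGraph (Fin n → Bool) where
  Adj u v := hammingDist u v = 1
  symm := ⟨fun u v (h : hammingDist u v = 1) => show hammingDist v u = 1 by rwa [hammingDist_comm]⟩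
  loopless := ⟨fun u h => by simp at h⟩

instance (n : ℕ) : DecidableRel (Q n).Adj := fun u v =>
  Nat.decEq (hammingDist u v) 1

/-- S is an independent set of Q n. -/
def IsIndep {n : ℕ} (S : Set (Fin n → Bool)) : Prop :=
  ∀ u ∈ S, ∀ v ∈ S, ¬ (Q n).Adj u v

/-- S is a dominating set of Q n. -/
def IsDom {n : ℕ} (S : Set (Fin n → Bool)) : Prop :=
  ∀ v, v ∉ S → ∃ u ∈ S, (Q n).Adj u v

/-- The independent domination number of Q n. -/
noncomputable def alpha (n : ℕ) : ℕ :=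
  sInf {m | ∃ S : Finset (Fin n → Bool),
    IsIndep (S : Set (Fin n → Bool)) ∧ IsDom (S : Set (Fin n → Bool)) ∧ S.card = m}

/-- The one-dimension extension {0·v : v ∈ S} ∪ {1·(v ⊕ e₀) : v ∈ S}. -/
def extSet {n : ℕ} (hn : 0 < n) (S : Finset (Fin n → Bool)) :
    Finset (Fin (n + 1) → Bool) :=
  S.image (fun v => Fin.cons false v) ∪
    S.image (fun v => Fin.cons true (Function.update v ⟨0, hn⟩ (!(v ⟨0, hn⟩))))

/- ---------- auxiliary definitions and lemmas ---------- -/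

def flip0 {n : ℕ} (hn : 0 < n) (v : Fin n → Bool) : Fin n → Bool :=
  Function.update v ⟨0, hn⟩ (!(v ⟨0, hn⟩))

lemma flip0_apply {n : ℕ} (hn : 0 < n) (v : Fin n → Bool) (i : Fin n) :
    flip0 hn v i = if i = ⟨0, hn⟩ then !(v i) else v i := by
  rw [flip0, Function.update_apply]
  by_cases h : i = ⟨0, hn⟩ <;> simp [h]

lemma flip0_flip0 {n : ℕ} (hn : 0 < n) (v : Fin n → Bool) :
    flip0 hn (flip0 hn v) = v := by
  funext i
  by_cases h : i = ⟨0, hn⟩ <;> simp [flip0_apply, h]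

lemma hd_flip0_left {n : ℕ} (hn : 0 < n) (u t : Fin n → Bool) :
    hammingDist (flip0 hn u) t = hammingDist u (flip0 hn t) := by
  unfold hammingDist
  congr 1
  apply Finset.filter_congr
  intro i _
  by_cases h : i = ⟨0, hn⟩
  · simp only [flip0_apply, if_pos h]
    cases hu : u i <;> cases ht : t i <;> simp
  · simp [flip0_apply, h]

lemma hd_flip0_both {n : ℕ} (hn : 0 < n) (u v : Fin n → Bool) :
    hammingDist (flip0 hn u) (flip0 hn v) = hammingDist u v := by
  unfold hammingDist
  congr 1
  apply Finset.filter_congr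
  intro i _
  by_cases h : i = ⟨0, hn⟩
  · simp only [flip0_apply, if_pos h]
    cases hu : u i <;> cases hv : v i <;> simp
  · simp [flip0_apply, h]

lemma hd_flip0_self {n : ℕ} (hn : 0 < n) (v : Fin n → Bool) :
    hammingDist (flip0 hn v) v = 1 := by
  unfold hammingDist
  apply Finset.card_eq_one.mpr
  refine ⟨⟨0, hn⟩, ?_⟩
  ext i
  by_cases h : i = ⟨0, hn⟩ <;> simp [flip0_apply, h]

lemma hd_cons {n : ℕ} (a b : Bool) (u v : Fin n → Bool) :
    hammingDist (Fin.cons a u : Fin (n + 1) → Bool) (Fin.cons b v)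
      = (if a = b then 0 else 1) + hammingDist u v := by
  unfold hammingDist
  rw [Finset.card_filter, Finset.card_filter, Fin.sum_univ_succ]
  simp only [Fin.cons_zero, Fin.cons_succ]
  by_cases h : a = b <;> simp [h]

lemma extSet_eq {n : ℕ} (hn : 0 < n) (S : Finset (Fin n → Bool)) :
    extSet hn S = S.image (fun v => (Fin.cons false v : Fin (n + 1) → Bool)) ∪
      S.image (fun v => (Fin.cons true (flip0 hn v) : Fin (n + 1) → Bool)) := rfl

lemma mem_extSet {n : ℕ} (hn : 0 < n) (S : Finset (Fin n → Bool))
    (x : Fin (n + 1) → Bool) :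
    x ∈ extSet hn S ↔
      (∃ v ∈ S, (Fin.cons false v : Fin (n + 1) → Bool) = x) ∨
      (∃ v ∈ S, (Fin.cons true (flip0 hn v) : Fin (n + 1) → Bool) = x) := by
  rw [extSet_eq]
  simp [Finset.mem_union, Finset.mem_image]

lemma exists_idom (m : ℕ) :
    ∃ S : Finset (Fin m → Bool),
      IsIndep (S : Set (Fin m → Bool)) ∧ IsDom (S : Set (Fin m → Bool)) := by
  classical
  have hemp : IsIndep ((∅ : Finset (Fin m → Bool)) : Set (Fin m → Bool)) := by
    intro u hu; simp at hu
  obtain ⟨S, hS, hmax⟩ := Finset.exists_max_image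
    (Finset.univ.filter fun S : Finset (Fin m → Bool) =>
      IsIndep (S : Set (Fin m → Bool))) Finset.card
    ⟨∅, by simpa using hemp⟩
  simp only [Finset.mem_filter, Finset.mem_univ, true_and] at hS
  refine ⟨S, hS, ?_⟩
  intro v hv
  by_contra hno
  push_neg at hno
  have hins : IsIndep ((insert v S : Finset (Fin m → Bool)) : Set (Fin m → Bool)) := by
    intro a ha b hb
    simp only [Finset.coe_insert, Set.mem_insert_iff, Finset.mem_coe] at ha hb
    rcases ha with rfl | ha <;> rcases hb with rfl | hb
    · exact (Q m).loopless.irrefl _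
    · intro h; exact hno b (Finset.mem_coe.mpr hb) ((Q m).symm.symm _ _ h)
    · exact hno a (Finset.mem_coe.mpr ha)
    · exact hS a (Finset.mem_coe.mpr ha) b (Finset.mem_coe.mpr hb)
  have hle := hmax (insert v S)
    (by simp only [Finset.mem_filter, Finset.mem_univ, true_and]; exact hins)
  rw [Finset.card_insert_of_notMem (fun h => hv (Finset.mem_coe.mpr h))] at hle
  omega

/-- Given an independent dominating set S of Q_n, its extension is an
    independent dominating set of Q_{n+1} of size 2|S|; consequently
    α_{n+1} ≤ 2·α_n for all n ≥ 1. -/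
theorem extension_indep_dom (n : ℕ) (hn : 0 < n) :
    (∀ S : Finset (Fin n → Bool),
      IsIndep (S : Set (Fin n → Bool)) → IsDom (S : Set (Fin n → Bool)) →
      IsIndep ((extSet hn S : Finset (Fin (n + 1) → Bool)) : Set (Fin (n + 1) → Bool)) ∧
      IsDom ((extSet hn S : Finset (Fin (n + 1) → Bool)) : Set (Fin (n + 1) → Bool)) ∧
      (extSet hn S).card = 2 * S.card) ∧
    alpha (n + 1) ≤ 2 * alpha n := by
  have key : ∀ S : Finset (Fin n → Bool),
      IsIndep (S : Set (Fin n → Bool)) → IsDom (S : Set (Fin n → Bool)) →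
      IsIndep ((extSet hn S : Finset (Fin (n + 1) → Bool)) : Set (Fin (n + 1) → Bool)) ∧
      IsDom ((extSet hn S : Finset (Fin (n + 1) → Bool)) : Set (Fin (n + 1) → Bool)) ∧
      (extSet hn S).card = 2 * S.card := by
    intro S hInd hDom
    refine ⟨?_, ?_, ?_⟩
    · -- independence
      intro x hx y hy hadj
      rw [Finset.mem_coe, mem_extSet] at hx hy
      have hadj' : hammingDist x y = 1 := hadj
      rcases hx with ⟨v, hv, rfl⟩ | ⟨v, hv, rfl⟩ <;>
        rcases hy with ⟨w, hw, rfl⟩ | ⟨w, hw, rfl⟩ <;>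
        rw [hd_cons] at hadj' <;> norm_num at hadj'
      · exact hInd v hv w hw hadj'
      · -- false / true : dist 0 between v and flip0 w
        have hvw : v = flip0 hn w := hadj'
        exact hInd v hv w hw (by rw [hvw]; exact hd_flip0_self hn w)
      · have hvw : flip0 hn v = w := hadj'
        refine hInd v hv w hw ?_
        show hammingDist v w = 1
        rw [← hvw, hammingDist_comm]
        exact hd_flip0_self hn v
      · refine hInd v hv w hw ?_
        show hammingDist v w = 1
        rw [← hd_flip0_both hn]
        exact hadj'
    · -- domination
      intro x hx
      have hxc : (Fin.cons (x 0) (Fin.tail x) : Fin (n + 1) → Bool) = x :=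
        Fin.cons_self_tail x
      rw [Finset.mem_coe] at hx
      cases hb : x 0 with
      | false =>
        have ht : Fin.tail x ∉ (S : Set (Fin n → Bool)) := by
          intro h
          exact hx ((mem_extSet hn S x).mpr
            (Or.inl ⟨_, Finset.mem_coe.mp h, by rw [← hb, hxc]⟩))
        obtain ⟨u, hu, hadju⟩ := hDom _ ht
        refine ⟨Fin.cons false u, ?_, ?_⟩
        · rw [Finset.mem_coe, mem_extSet]
          exact Or.inl ⟨u, Finset.mem_coe.mp hu, rfl⟩
        · show hammingDist _ x = 1
          rw [← hxc, hb, hd_cons]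
          have h1 : hammingDist u (Fin.tail x) = 1 := hadju
          simp [h1]
      | true =>
        have ht : flip0 hn (Fin.tail x) ∉ (S : Set (Fin n → Bool)) := by
          intro h
          refine hx ((mem_extSet hn S x).mpr (Or.inr ⟨_, Finset.mem_coe.mp h, ?_⟩))
          rw [flip0_flip0, ← hb, hxc]
        obtain ⟨u, hu, hadju⟩ := hDom _ ht
        refine ⟨Fin.cons true (flip0 hn u), ?_, ?_⟩
        · rw [Finset.mem_coe, mem_extSet]
          exact Or.inr ⟨u, Finset.mem_coe.mp hu, rfl⟩
        · show hammingDist _ x = 1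
          rw [← hxc, hb, hd_cons, hd_flip0_left]
          have h1 : hammingDist u (flip0 hn (Fin.tail x)) = 1 := hadju
          simp [h1]
    · -- cardinality
      have hdisj : Disjoint
          (S.image (fun v => (Fin.cons false v : Fin (n + 1) → Bool)))
          (S.image (fun v => (Fin.cons true (flip0 hn v) : Fin (n + 1) → Bool))) := by
        rw [Finset.disjoint_left]
        rintro a ha hb
        simp only [Finset.mem_image] at ha hb
        obtain ⟨v, _, rfl⟩ := ha
        obtain ⟨w, _, hw⟩ := hb
        have := congrFun hw 0
        simp at this
      have hinj1 : Function.Injective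
          (fun v => (Fin.cons false v : Fin (n + 1) → Bool)) := by
        intro a b h
        have := congrArg Fin.tail h
        simpa [Fin.tail_cons] using this
      have hinj2 : Function.Injective
          (fun v => (Fin.cons true (flip0 hn v) : Fin (n + 1) → Bool)) := by
        intro a b h
        have h2 := congrArg Fin.tail h
        simp only [Fin.tail_cons] at h2
        have := congrArg (flip0 hn) h2
        rwa [flip0_flip0, flip0_flip0] at this
      rw [extSet_eq, Finset.card_union_of_disjoint hdisj,
        Finset.card_image_of_injective _ hinj1,
        Finset.card_image_of_injective _ hinj2]
      omega
  refine ⟨key, ?_⟩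
  have h1 : alpha n ∈ {m | ∃ S : Finset (Fin n → Bool),
      IsIndep (S : Set (Fin n → Bool)) ∧ IsDom (S : Set (Fin n → Bool)) ∧ S.card = m} := by
    apply Nat.sInf_mem
    obtain ⟨S, hI, hD⟩ := exists_idom n
    exact ⟨S.card, S, hI, hD, rfl⟩
  obtain ⟨S, hI, hD, hc⟩ := h1
  obtain ⟨hI', hD', hc'⟩ := key S hI hD
  apply Nat.sInf_le
  exact ⟨extSet hn S, hI', hD', by rw [hc', hc]⟩
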